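/- arXiv:2603.19056 — 4 statements merged into one kernel-verified Lean document; each statement's English description precedes it below -/
import Mathlib

section
/- Let m ≥ 2 be an integer and Δx > 0. The kernel of the second-order mimetic gradient matrix G is exactly the one-dimensional span of the all-ones vector in ℝ^(m+2); equivalently, G has full row rank m+1. -/
open Matrix

/-- The second-order mimetic gradient operator on a 1D staggered grid with `m` cells
and spacing `dx`: an `(m+1) × (m+2)` matrix. -/
noncomputable def mimG (m : ℕ) (dx : ℝ) : Matrix (Fin (m+1)) (Fin (m+2)) ℝ :=
  Matrix.of fun i j =>
    if i.val = 0 then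
      if j.val = 0 then -8/(3*dx) else if j.val = 1 then 3/dx
      else if j.val = 2 then -1/(3*dx) else 0
    else if i.val = m then
      if j.val = m-1 then 1/(3*dx) else if j.val = m then -3/dx
      else if j.val = m+1 then 8/(3*dx) else 0
    else
      if j.val = i.val then -1/dx else if j.val = i.val + 1 then 1/dx else 0

/-- The second-order mimetic divergence operator on a 1D staggered grid with `m` cells
and spacing `dx`: an `(m+2) × (m+1)` matrix with zero first and last rows. -/
noncomputable def mimD (m : ℕ) (dx : ℝ) : Matrix (Fin (m+2)) (Fin (m+1)) ℝ :=
  Matrix.of fun j i =>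
    if j.val = 0 ∨ j.val = m+1 then 0
    else if i.val = j.val - 1 then -1/dx
    else if i.val = j.val then 1/dx else 0


lemma sum_two_support {n : ℕ} (g : Fin n → ℝ) (a b : Fin n) (hab : a ≠ b)
    (h : ∀ j, j ≠ a → j ≠ b → g j = 0) :
    ∑ j, g j = g a + g b := by
  rw [← Finset.sum_subset (Finset.subset_univ {a, b})]
  · rw [Finset.sum_pair hab]
  · intro x _ hx
    simp only [Finset.mem_insert, Finset.mem_singleton, not_or] at hx
    exact h x hx.1 hx.2

lemma sum_three_support {n : ℕ} (g : Fin n → ℝ) (a b c : Fin n)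
    (hab : a ≠ b) (hac : a ≠ c) (hbc : b ≠ c)
    (h : ∀ j, j ≠ a → j ≠ b → j ≠ c → g j = 0) :
    ∑ j, g j = g a + g b + g c := by
  rw [← Finset.sum_subset (Finset.subset_univ {a, b, c})]
  · rw [Finset.sum_insert (by simp [hab, hac]), Finset.sum_pair hbc]; ring
  · intro x _ hx
    simp only [Finset.mem_insert, Finset.mem_singleton, not_or] at hx
    exact h x hx.1 hx.2.1 hx.2.2

lemma mimG_row_interior (m : ℕ) (dx : ℝ) (f : Fin (m+2) → ℝ) (i : Fin (m+1))
    (h1 : i.val ≠ 0) (h2 : i.val ≠ m) :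
    (mimG m dx *ᵥ f) i
      = (-1/dx) * f ⟨i.val, by omega⟩ + (1/dx) * f ⟨i.val + 1, by omega⟩ := by
  have hi : i.val < m + 1 := i.isLt
  simp only [Matrix.mulVec, dotProduct, mimG, Matrix.of_apply, h1, h2, if_false]
  rw [sum_two_support _ ⟨i.val, by omega⟩ ⟨i.val + 1, by omega⟩ (by simp)]
  · simp
  · intro j hj1 hj2
    have e1 : j.val ≠ i.val := fun h => hj1 (Fin.ext h)
    have e2 : j.val ≠ i.val + 1 := fun h => hj2 (Fin.ext h)
    simp [e1, e2]

lemma mimG_row_zero (m : ℕ) (hm : 2 ≤ m) (dx : ℝ) (f : Fin (m+2) → ℝ) :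
    (mimG m dx *ᵥ f) ⟨0, by omega⟩
      = (-8/(3*dx)) * f ⟨0, by omega⟩ + (3/dx) * f ⟨1, by omega⟩
        + (-1/(3*dx)) * f ⟨2, by omega⟩ := by
  simp only [Matrix.mulVec, dotProduct, mimG, Matrix.of_apply]
  rw [sum_three_support _ ⟨0, by omega⟩ ⟨1, by omega⟩ ⟨2, by omega⟩
      (by simp only [ne_eq, Fin.mk.injEq]; omega) (by simp only [ne_eq, Fin.mk.injEq]; omega)
      (by simp only [ne_eq, Fin.mk.injEq]; omega)]
  · simp
  · intro j hj1 hj2 hj3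
    have e1 : j.val ≠ 0 := fun h => hj1 (Fin.ext h)
    have e2 : j.val ≠ 1 := fun h => hj2 (Fin.ext h)
    have e3 : j.val ≠ 2 := fun h => hj3 (Fin.ext h)
    simp [e1, e2, e3]

lemma mimG_row_last (m : ℕ) (hm : 2 ≤ m) (dx : ℝ) (f : Fin (m+2) → ℝ) :
    (mimG m dx *ᵥ f) ⟨m, by omega⟩
      = (1/(3*dx)) * f ⟨m-1, by omega⟩ + (-3/dx) * f ⟨m, by omega⟩
        + (8/(3*dx)) * f ⟨m+1, by omega⟩ := by
  have hm0 : m ≠ 0 := by omega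
  simp only [Matrix.mulVec, dotProduct, mimG, Matrix.of_apply, hm0, if_false, if_true]
  rw [sum_three_support _ ⟨m-1, by omega⟩ ⟨m, by omega⟩ ⟨m+1, by omega⟩
      (by simp only [ne_eq, Fin.mk.injEq]; omega) (by simp only [ne_eq, Fin.mk.injEq]; omega)
      (by simp only [ne_eq, Fin.mk.injEq]; omega)]
  · have h1 : ¬ m = m - 1 := by omega
    have h2 : ¬ m + 1 = m - 1 := by omega
    have h3 : ¬ m + 1 = m := by omega
    simp [hm0, h1, h2, h3]
  · intro j hj1 hj2 hj3
    have e1 : j.val ≠ m - 1 := fun h => hj1 (Fin.ext h)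
    have e2 : j.val ≠ m := fun h => hj2 (Fin.ext h)
    have e3 : j.val ≠ m + 1 := fun h => hj3 (Fin.ext h)
    simp [e1, e2, e3, hm0]

/-- The kernel of the second-order mimetic gradient is exactly the span of the
all-ones vector; equivalently `G` has full row rank `m+1`. -/
theorem mimetic_grad_kernel (m : ℕ) (hm : 2 ≤ m) (dx : ℝ) (hdx : 0 < dx) :
    (∀ f : Fin (m+2) → ℝ, mimG m dx *ᵥ f = 0 ↔ ∃ c : ℝ, f = fun _ => c) ∧
    (mimG m dx).rank = m + 1 := by
  have hdx' : dx ≠ 0 := ne_of_gt hdx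
  have key : ∀ f : Fin (m+2) → ℝ, mimG m dx *ᵥ f = 0 ↔ ∃ c : ℝ, f = fun _ => c := by
    intro f
    constructor
    · intro h
      have hint : ∀ k (hk1 : 1 ≤ k) (hk2 : k ≤ m), f ⟨k, by omega⟩ = f ⟨1, by omega⟩ := by
        intro k
        induction k with
        | zero => omega
        | succ n ih =>
          intro hk hk2
          rcases Nat.lt_or_ge 0 n with h1 | h1
          · have hrow := mimG_row_interior m dx f ⟨n, by omega⟩ (by simpa using by omega)
              (by simpa using by omega)
            have h0 : (mimG m dx *ᵥ f) ⟨n, by omega⟩ = 0 := by rw [h]; rfl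
            rw [h0] at hrow
            have heq : f ⟨n + 1, by omega⟩ = f ⟨n, by omega⟩ := by
              field_simp at hrow
              have hq : f ⟨n + 1, by omega⟩ * dx = f ⟨n, by omega⟩ * dx := by linear_combination (-dx) * hrow
              exact mul_right_cancel₀ hdx' hq
            rw [heq]; exact ih (by omega) (by omega)
          · have hn : n = 0 := by omega
            subst hn; rfl
      set c := f ⟨1, by omega⟩ with hc
      have h2 : f ⟨2, by omega⟩ = c := hint 2 (by omega) (by omega)
      have hm1 : f ⟨m - 1, by omega⟩ = c := hint (m-1) (by omega) (by omega)
      have hmm : f ⟨m, by omega⟩ = c := hint m (by omega) (by omega)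
      have h0 : f ⟨0, by omega⟩ = c := by
        have hrow := mimG_row_zero m hm dx f
        have hz : (mimG m dx *ᵥ f) ⟨0, by omega⟩ = 0 := by rw [h]; rfl
        rw [hz, h2, ← hc] at hrow
        field_simp at hrow
        have hq : f 0 * (24 * (dx * dx)) = c * (24 * (dx * dx)) := by
          show f ⟨0, by omega⟩ * (24 * (dx * dx)) = c * (24 * (dx * dx))
          linear_combination (3 * dx * dx) * hrow
        exact mul_right_cancel₀ (by positivity) hq
      have hlast : f ⟨m + 1, by omega⟩ = c := by
        have hrow := mimG_row_last m hm dx f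
        have hz : (mimG m dx *ᵥ f) ⟨m, by omega⟩ = 0 := by rw [h]; rfl
        rw [hz, hm1, hmm] at hrow
        field_simp at hrow
        have hq : f ⟨m + 1, by omega⟩ * (24 * (dx * dx)) = c * (24 * (dx * dx)) := by
          linear_combination (-3 * dx * dx) * hrow
        exact mul_right_cancel₀ (by positivity) hq
      refine ⟨c, funext fun j => ?_⟩
      rcases Nat.lt_or_ge j.val 1 with hj | hj
      · have : j = ⟨0, by omega⟩ := Fin.ext (show j.val = 0 by omega)
        rw [this]; exact h0
      rcases Nat.lt_or_ge j.val (m+1) with hj2 | hj2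
      · have : j = ⟨j.val, by omega⟩ := Fin.ext rfl
        rw [this]; exact hint j.val hj (by omega)
      · have : j = ⟨m+1, by omega⟩ := Fin.ext (show j.val = m+1 by omega)
        rw [this]; exact hlast
    · rintro ⟨c, rfl⟩
      funext i
      show (mimG m dx *ᵥ fun _ => c) i = 0
      rcases Nat.lt_or_ge i.val 1 with hi | hi
      · have : i = ⟨0, by omega⟩ := Fin.ext (show i.val = 0 by omega)
        rw [this, mimG_row_zero m hm dx]
        field_simp; ring
      rcases Nat.lt_or_ge i.val m with hi2 | hi2
      · rw [mimG_row_interior m dx _ i (by omega) (by omega)]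
        field_simp
        ring
      · have : i = ⟨m, by omega⟩ := Fin.ext (show i.val = m by omega)
        rw [this, mimG_row_last m hm dx]
        field_simp; ring
  refine ⟨key, ?_⟩
  have hone : (fun _ : Fin (m+2) => (1:ℝ)) ≠ 0 := by
    intro hcon
    have := congrFun hcon ⟨0, by omega⟩
    simp at this
  have hker : LinearMap.ker (mimG m dx).mulVecLin
      = Submodule.span ℝ {fun _ : Fin (m+2) => (1:ℝ)} := by
    ext f
    rw [LinearMap.mem_ker, Matrix.mulVecLin_apply, key, Submodule.mem_span_singleton]
    constructor
    · rintro ⟨c, rfl⟩; exact ⟨c, by funext x; simp⟩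
    · rintro ⟨a, rfl⟩; exact ⟨a, by funext x; simp⟩
  have h1 := LinearMap.finrank_range_add_finrank_ker (mimG m dx).mulVecLin
  rw [hker, finrank_span_singleton hone] at h1
  rw [Matrix.rank]
  have h2 : Module.finrank ℝ (Fin (m+2) → ℝ) = m + 2 := by simp
  omega
end

section
/- Let m ≥ 2 be an integer and Δx > 0. The kernel of the second-order mimetic divergence matrix D is exactly the one-dimensional span of the all-ones vector in ℝ^(m+1); equivalently, D has rank m. -/
open Matrix

lemma mimD_row (m : ℕ) (dx : ℝ) (v : Fin (m+1) → ℝ) (j : Fin (m+2))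
    (h1 : j.val ≠ 0) (h2 : j.val ≠ m+1) :
    (mimD m dx *ᵥ v) j
      = (1/dx) * v ⟨j.val, by have := j.isLt; omega⟩
        - (1/dx) * v ⟨j.val - 1, by have := j.isLt; omega⟩ := by
  have hjlt := j.isLt
  set a : Fin (m+1) := ⟨j.val - 1, by omega⟩
  set b : Fin (m+1) := ⟨j.val, by omega⟩
  have hab : a ≠ b := by
    simp [a, b, Fin.ext_iff]; omega
  have hj : ¬(j.val = 0 ∨ j.val = m+1) := by omega
  show ∑ i, mimD m dx j i * v i = _
  have key : ∀ i : Fin (m+1), mimD m dx j i * v i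
      = (if i = a then (-1/dx) * v i else 0) + (if i = b then (1/dx) * v i else 0) := by
    intro i
    simp only [mimD, Matrix.of_apply, hj, if_false]
    by_cases hia : i = a
    · subst hia
      have : (a : ℕ) = j.val - 1 := rfl
      simp [this, hab]
    · by_cases hib : i = b
      · subst hib
        have h1 : ¬((b:ℕ) = j.val - 1) := by simp [b]; omega
        simp only [h1, if_false, Ne.symm hab, if_neg]
        have hb : ((b:ℕ) = j.val) := rfl
        simp [hb, Ne.symm hab]
      · have h1 : ¬((i:ℕ) = j.val - 1) := by
          intro h; exact hia (Fin.ext h)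
        have h2 : ¬((i:ℕ) = j.val) := by
          intro h; exact hib (Fin.ext h)
        simp [h1, h2, hia, hib]
  rw [Finset.sum_congr rfl fun i _ => key i, Finset.sum_add_distrib,
    Finset.sum_ite_eq' Finset.univ a, Finset.sum_ite_eq' Finset.univ b]
  simp
  ring

/-- The kernel of the second-order mimetic divergence is exactly the span of the
all-ones vector; equivalently `D` has rank `m`. -/
theorem mimetic_div_kernel (m : ℕ) (hm : 2 ≤ m) (dx : ℝ) (hdx : 0 < dx) :
    (∀ v : Fin (m+1) → ℝ, mimD m dx *ᵥ v = 0 ↔ ∃ c : ℝ, v = fun _ => c) ∧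
    (mimD m dx).rank = m := by
  have hdx' : dx ≠ 0 := ne_of_gt hdx
  have hker : ∀ v : Fin (m+1) → ℝ, mimD m dx *ᵥ v = 0 ↔ ∃ c : ℝ, v = fun _ => c := by
    intro v
    constructor
    · intro h
      refine ⟨v 0, ?_⟩
      funext i
      -- show v i = v 0 by strong induction on i.val
      have step : ∀ k (hk : k < m + 1), v ⟨k, hk⟩ = v 0 := by
        intro k
        induction k with
        | zero => intro hk; rfl
        | succ n ih =>
          intro hk
          have hrow := mimD_row m dx v ⟨n+1, by omega⟩ (by simp) (by simp; omega)
          rw [h] at hrow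
          simp at hrow
          have : v ⟨n+1, hk⟩ = v ⟨n, by omega⟩ := by
            have := sub_eq_zero.mp hrow.symm
            have h2 := mul_left_cancel₀ (a := dx⁻¹) (inv_ne_zero hdx') this
            convert h2 using 2
          rw [this, ih]
      have := step i.val i.isLt
      simpa using this
    · rintro ⟨c, rfl⟩
      funext j
      by_cases hj : j.val = 0 ∨ j.val = m+1
      · show ∑ i, mimD m dx j i * (fun _ => c) i = 0
        simp only [mimD, Matrix.of_apply, hj, ↓reduceIte, zero_mul, Finset.sum_const_zero]
      · push_neg at hj
        rw [mimD_row m dx _ j hj.1 hj.2]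
        simp
  refine ⟨hker, ?_⟩
  -- rank via rank-nullity
  have hkerLin : LinearMap.ker (mimD m dx).mulVecLin = Submodule.span ℝ {(fun _ => 1 : Fin (m+1) → ℝ)} := by
    ext v
    simp only [LinearMap.mem_ker, Matrix.mulVecLin_apply, Submodule.mem_span_singleton]
    rw [hker v]
    constructor
    · rintro ⟨c, rfl⟩
      refine ⟨c, ?_⟩
      funext i
      simp
    · rintro ⟨c, rfl⟩
      refine ⟨c, ?_⟩
      funext i
      simp
  have hrn := LinearMap.finrank_range_add_finrank_ker (mimD m dx).mulVecLin
  rw [hkerLin] at hrn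
  have hone : (fun _ => 1 : Fin (m+1) → ℝ) ≠ 0 := by
    intro h
    have := congrFun h 0
    simp at this
  rw [finrank_span_singleton hone] at hrn
  have hdom : Module.finrank ℝ (Fin (m+1) → ℝ) = m + 1 := by simp
  rw [hdom] at hrn
  have : (mimD m dx).rank = Module.finrank ℝ (LinearMap.range (mimD m dx).mulVecLin) := rfl
  omega
end

section
/- Let m ≥ 2 be an integer and Δx > 0, and let L = D·G be the second-order mimetic Laplacian. For every real polynomial p of degree at most 2, if f ∈ ℝ^(m+2) is the vector with f_1 = p(0), f_j = p((j - 3/2)Δx) for 2 ≤ j ≤ m+1, and f_{m+2} = p(mΔx), then the first and last entries of L·f are zero, and for every 2 ≤ j ≤ m+1 the j-th entry of L·f equals the (constant) second derivative p''. -/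
open Matrix Polynomial

lemma sum2 {n : ℕ} (a₁ a₂ : Fin n) (c₁ c₂ : ℝ) (v : Fin n → ℝ) :
    ∑ j, ((if j = a₁ then c₁ else 0) + (if j = a₂ then c₂ else 0)) * v j
      = c₁ * v a₁ + c₂ * v a₂ := by
  simp [add_mul, Finset.sum_add_distrib, ite_mul, Finset.sum_ite_eq']

lemma sum3 {n : ℕ} (a₁ a₂ a₃ : Fin n) (c₁ c₂ c₃ : ℝ) (v : Fin n → ℝ) :
    ∑ j, ((if j = a₁ then c₁ else 0) + (if j = a₂ then c₂ else 0)
        + (if j = a₃ then c₃ else 0)) * v j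
      = c₁ * v a₁ + c₂ * v a₂ + c₃ * v a₃ := by
  simp [add_mul, Finset.sum_add_distrib, ite_mul, Finset.sum_ite_eq']

lemma mimG_eval (m : ℕ) (hm : 2 ≤ m) (dx : ℝ) (hdx : 0 < dx) (a b c : ℝ)
    (f : Fin (m+2) → ℝ)
    (hf0 : f 0 = a)
    (hfi : ∀ j : Fin (m+2), 1 ≤ j.val → j.val ≤ m →
      f j = a + b*(((j.val:ℝ) - 1/2)*dx) + c*(((j.val:ℝ) - 1/2)*dx)^2)
    (hfl : f (Fin.last (m+1)) = a + b*((m:ℝ)*dx) + c*((m:ℝ)*dx)^2)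
    (i : Fin (m+1)) :
    (mimG m dx *ᵥ f) i = b + 2*c*((i.val:ℝ)*dx) := by
  have hdx' : dx ≠ 0 := ne_of_gt hdx
  show ∑ j, mimG m dx i j * f j = _
  by_cases h0 : i.val = 0
  · have hrow : ∀ j : Fin (m+2), mimG m dx i j =
        (if j = (⟨0, by omega⟩ : Fin (m+2)) then -8/(3*dx) else 0)
        + (if j = (⟨1, by omega⟩ : Fin (m+2)) then 3/dx else 0)
        + (if j = (⟨2, by omega⟩ : Fin (m+2)) then -1/(3*dx) else 0) := by
      intro j
      have : mimG m dx i j = (if j.val = 0 then -8/(3*dx) else if j.val = 1 then 3/dx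
          else if j.val = 2 then -1/(3*dx) else 0) := by
        simp only [mimG, Matrix.of_apply, h0, if_true, ↓reduceIte]
      rw [this]
      simp only [Fin.ext_iff]
      split_ifs <;> first | ring1 | omega
    rw [Finset.sum_congr rfl (fun j _ => by rw [hrow j]), sum3]
    have e0 : (⟨0, by omega⟩ : Fin (m+2)) = 0 := rfl
    rw [e0, hf0, hfi ⟨1, by omega⟩ (by simp only [Fin.val_mk]; omega) (by simp only [Fin.val_mk]; omega),
        hfi ⟨2, by omega⟩ (by simp only [Fin.val_mk]; omega) (by simp only [Fin.val_mk]; omega), h0]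
    push_cast
    field_simp
    ring
  · by_cases hl : i.val = m
    · have hrow : ∀ j : Fin (m+2), mimG m dx i j =
          (if j = (⟨m-1, by omega⟩ : Fin (m+2)) then 1/(3*dx) else 0)
          + (if j = (⟨m, by omega⟩ : Fin (m+2)) then -3/dx else 0)
          + (if j = (⟨m+1, by omega⟩ : Fin (m+2)) then 8/(3*dx) else 0) := by
        intro j
        have : mimG m dx i j = (if j.val = m-1 then 1/(3*dx) else if j.val = m then -3/dx
            else if j.val = m+1 then 8/(3*dx) else 0) := by
          have hm0 : ¬ m = 0 := by omega
          simp only [mimG, Matrix.of_apply, h0, hl, hm0, if_true, if_false, ↓reduceIte]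
        rw [this]
        simp only [Fin.ext_iff]
        split_ifs <;> first | ring1 | omega
      rw [Finset.sum_congr rfl (fun j _ => by rw [hrow j]), sum3]
      have el : (⟨m+1, by omega⟩ : Fin (m+2)) = Fin.last (m+1) := rfl
      rw [el, hfl, hfi ⟨m-1, by omega⟩ (by simp only [Fin.val_mk]; omega) (by simp only [Fin.val_mk]; omega),
          hfi ⟨m, by omega⟩ (by simp only [Fin.val_mk]; omega) (by simp only [Fin.val_mk]; omega)]
      simp only [Fin.val_mk, hl]
      have hc : ((m-1 : ℕ) : ℝ) = (m:ℝ) - 1 := by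
        have h1 : (1:ℕ) ≤ m := by omega
        push_cast [Nat.cast_sub h1]; ring
      rw [hc]
      field_simp
      ring
    · have hrow : ∀ j : Fin (m+2), mimG m dx i j =
          (if j = (⟨i.val, by omega⟩ : Fin (m+2)) then -1/dx else 0)
          + (if j = (⟨i.val+1, by omega⟩ : Fin (m+2)) then 1/dx else 0) := by
        intro j
        have : mimG m dx i j = (if j.val = i.val then -1/dx
            else if j.val = i.val + 1 then 1/dx else 0) := by
          simp only [mimG, Matrix.of_apply, h0, hl, if_false, ↓reduceIte]
        rw [this]
        simp only [Fin.ext_iff]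
        split_ifs <;> first | ring1 | omega
      rw [Finset.sum_congr rfl (fun j _ => by rw [hrow j]), sum2]
      rw [hfi ⟨i.val, by omega⟩ (by simp only [Fin.val_mk]; omega) (by simp only [Fin.val_mk]; omega),
          hfi ⟨i.val+1, by omega⟩ (by simp only [Fin.val_mk]; omega) (by simp only [Fin.val_mk]; omega)]
      simp only [Fin.val_mk]
      push_cast
      field_simp
      ring

/-- The second-order mimetic Laplacian `L = D·G` reproduces the (constant) second
derivative of any polynomial of degree ≤ 2 at all interior cell centers, with
vanishing first and last entries. -/
theorem mimetic_laplacian_exact_quadratics (m : ℕ) (hm : 2 ≤ m) (dx : ℝ) (hdx : 0 < dx)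
    (p : Polynomial ℝ) (hp : p.degree ≤ 2)
    (f : Fin (m+2) → ℝ)
    (hf0 : f 0 = p.eval 0)
    (hfi : ∀ j : Fin (m+2), 1 ≤ j.val → j.val ≤ m →
      f j = p.eval (((j.val : ℝ) - 1/2) * dx))
    (hfl : f (Fin.last (m+1)) = p.eval ((m : ℝ) * dx)) :
    ((mimD m dx * mimG m dx) *ᵥ f) 0 = 0 ∧
    ((mimD m dx * mimG m dx) *ᵥ f) (Fin.last (m+1)) = 0 ∧
    ∀ j : Fin (m+2), 1 ≤ j.val → j.val ≤ m →
      ((mimD m dx * mimG m dx) *ᵥ f) j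
        = (Polynomial.derivative (Polynomial.derivative p)).eval 0 := by

  have hdx' : dx ≠ 0 := ne_of_gt hdx
  set a := p.coeff 0 with ha
  set b := p.coeff 1 with hb
  set c := p.coeff 2 with hc
  have hnd : p.natDegree < 3 :=
    lt_of_le_of_lt (Polynomial.natDegree_le_iff_degree_le.mpr hp) (by norm_num)
  have heval : ∀ x : ℝ, p.eval x = a + b*x + c*x^2 := by
    intro x
    rw [Polynomial.eval_eq_sum_range' hnd]
    simp [Finset.sum_range_succ]
    try ring
  have hdd : (Polynomial.derivative (Polynomial.derivative p)).eval 0 = 2*c := by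
    rw [← Polynomial.coeff_zero_eq_eval_zero]
    simp [Polynomial.coeff_derivative]
    try ring
  have hg := mimG_eval m hm dx hdx a b c f
    (by rw [hf0, heval]; ring)
    (fun j h1 h2 => by rw [hfi j h1 h2, heval])
    (by rw [hfl, heval])
  have key : (mimD m dx * mimG m dx) *ᵥ f = mimD m dx *ᵥ (mimG m dx *ᵥ f) :=
    (Matrix.mulVec_mulVec f (mimD m dx) (mimG m dx)).symm
  refine ⟨?_, ?_, ?_⟩
  · rw [key]
    show ∑ i, mimD m dx 0 i * _ = 0
    have : ∀ i : Fin (m+1), mimD m dx (0 : Fin (m+2)) i = 0 := by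
      intro i; simp [mimD]
    exact Finset.sum_eq_zero (fun i _ => by rw [this i, zero_mul])
  · rw [key]
    show ∑ i, mimD m dx (Fin.last (m+1)) i * _ = 0
    have : ∀ i : Fin (m+1), mimD m dx (Fin.last (m+1)) i = 0 := by
      intro i; simp [mimD]
    exact Finset.sum_eq_zero (fun i _ => by rw [this i, zero_mul])
  · intro j h1 h2
    rw [key, hdd]
    show ∑ i, mimD m dx j i * (mimG m dx *ᵥ f) i = 2*c
    have hrow : ∀ i : Fin (m+1), mimD m dx j i =
        (if i = (⟨j.val - 1, by omega⟩ : Fin (m+1)) then -1/dx else 0)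
        + (if i = (⟨j.val, by omega⟩ : Fin (m+1)) then 1/dx else 0) := by
      intro i
      have hj : ¬ (j.val = 0 ∨ j.val = m+1) := by omega
      have : mimD m dx j i = (if i.val = j.val - 1 then -1/dx
          else if i.val = j.val then 1/dx else 0) := by
        simp only [mimD, Matrix.of_apply, hj, if_false, ↓reduceIte]
      rw [this]
      simp only [Fin.ext_iff]
      split_ifs <;> first | ring1 | omega
    rw [Finset.sum_congr rfl (fun i _ => by rw [hrow i]), sum2, hg, hg]
    simp only [Fin.val_mk]
    have hc1 : ((j.val - 1 : ℕ) : ℝ) = (j.val : ℝ) - 1 := by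
      push_cast [Nat.cast_sub h1]; ring
    rw [hc1]
    field_simp
    ring
end

section
/- Let m ≥ 2 be an integer, Δx > 0, ε > 0, μ > 0, and let G and D be the second-order mimetic gradient and divergence. Let Q be a symmetric (m+2)×(m+2) real matrix, P a symmetric (m+1)×(m+1) real matrix, and set B = Q·D + Gᵀ·P. If E : ℝ → ℝ^(m+2) and H : ℝ → ℝ^(m+1) are differentiable functions satisfying the semi-discrete Maxwell system E'(t) = -(1/ε)·D·H(t) and H'(t) = -(1/μ)·G·E(t), then the discrete energy 𝔈(t) = ε·E(t)ᵀQE(t) + μ·H(t)ᵀPH(t) satisfies d𝔈/dt = -2·E(t)ᵀ·B·H(t). In particular, if B has nonzero entries only in rows corresponding to boundary grid points, the discrete energy changes only through boundary terms. -/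
open Matrix

lemma quad_deriv {n : ℕ} (Q : Matrix (Fin n) (Fin n) ℝ) (E : ℝ → Fin n → ℝ)
    (E' : Fin n → ℝ) (t : ℝ) (h : ∀ i, HasDerivAt (fun s => E s i) (E' i) t) :
    HasDerivAt (fun s => E s ⬝ᵥ (Q *ᵥ E s))
      (E' ⬝ᵥ (Q *ᵥ E t) + E t ⬝ᵥ (Q *ᵥ E')) t := by
  simp only [dotProduct, mulVec, ← Finset.sum_add_distrib]
  apply HasDerivAt.fun_sum
  intro i _
  exact (h i).mul (HasDerivAt.fun_sum fun j _ => (h j).const_mul (Q i j))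

lemma flip_dot {a b : ℕ} (M : Matrix (Fin a) (Fin b) ℝ) (u : Fin a → ℝ) (v : Fin b → ℝ) :
    u ⬝ᵥ (M *ᵥ v) = v ⬝ᵥ (Mᵀ *ᵥ u) := by
  rw [Matrix.dotProduct_mulVec, ← Matrix.mulVec_transpose, dotProduct_comm]

lemma symm_dot {n : ℕ} {Q : Matrix (Fin n) (Fin n) ℝ} (hQ : Q.IsSymm) (u v : Fin n → ℝ) :
    u ⬝ᵥ (Q *ᵥ v) = v ⬝ᵥ (Q *ᵥ u) := by
  rw [flip_dot, hQ.eq]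

/-- Discrete energy identity for the semi-discrete mimetic Maxwell system: with
symmetric weight matrices `Q`, `P` and boundary operator `B = QD + GᵀP`, the
discrete energy `𝔈(t) = ε·EᵀQE + μ·HᵀPH` satisfies `d𝔈/dt = -2·Eᵀ B H`; in
particular, if `B` is supported on the boundary rows, the energy changes only
through the two boundary grid points. -/
theorem mimetic_discrete_energy_identity (m : ℕ) (hm : 2 ≤ m)
    (dx ε μ : ℝ) (hdx : 0 < dx) (hε : 0 < ε) (hμ : 0 < μ)
    (Q : Matrix (Fin (m+2)) (Fin (m+2)) ℝ) (hQ : Q.IsSymm)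
    (P : Matrix (Fin (m+1)) (Fin (m+1)) ℝ) (hP : P.IsSymm)
    (E : ℝ → Fin (m+2) → ℝ) (H : ℝ → Fin (m+1) → ℝ)
    (hE : ∀ t : ℝ, ∀ i : Fin (m+2),
      HasDerivAt (fun s => E s i) (-(1/ε) * (mimD m dx *ᵥ H t) i) t)
    (hH : ∀ t : ℝ, ∀ i : Fin (m+1),
      HasDerivAt (fun s => H s i) (-(1/μ) * (mimG m dx *ᵥ E t) i) t) :
    (∀ t : ℝ,
      HasDerivAt (fun s => ε * (E s ⬝ᵥ (Q *ᵥ E s)) + μ * (H s ⬝ᵥ (P *ᵥ H s)))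
        (-2 * (E t ⬝ᵥ ((Q * mimD m dx + (mimG m dx)ᵀ * P) *ᵥ H t))) t) ∧
    ((∀ i : Fin (m+2), i.val ≠ 0 → i.val ≠ m + 1 →
        ∀ j : Fin (m+1), (Q * mimD m dx + (mimG m dx)ᵀ * P) i j = 0) →
      ∀ t : ℝ,
        HasDerivAt (fun s => ε * (E s ⬝ᵥ (Q *ᵥ E s)) + μ * (H s ⬝ᵥ (P *ᵥ H s)))
          (-2 * (E t 0 * ((Q * mimD m dx + (mimG m dx)ᵀ * P) *ᵥ H t) 0
            + E t (Fin.last (m+1))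
              * ((Q * mimD m dx + (mimG m dx)ᵀ * P) *ᵥ H t) (Fin.last (m+1)))) t) := by
  set D := mimD m dx with hD
  set G := mimG m dx with hG
  have key : ∀ t, HasDerivAt (fun s => ε * (E s ⬝ᵥ (Q *ᵥ E s)) + μ * (H s ⬝ᵥ (P *ᵥ H s)))
      (-2 * (E t ⬝ᵥ ((Q * D + Gᵀ * P) *ᵥ H t))) t := by
    intro t
    have hq := quad_deriv Q E (fun i => -(1/ε) * (D *ᵥ H t) i) t (hE t)
    have hp := quad_deriv P H (fun i => -(1/μ) * (G *ᵥ E t) i) t (hH t)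
    have hd := (hq.const_mul ε).add (hp.const_mul μ)
    convert hd using 1
    case e'_4 => rfl
    case e'_5 => rfl
    case e'_8 => rfl
    have e1 : (fun i => -(1/ε) * (D *ᵥ H t) i) = (-(1/ε)) • (D *ᵥ H t) := rfl
    have e2 : (fun i => -(1/μ) * (G *ᵥ E t) i) = (-(1/μ)) • (G *ᵥ E t) := rfl
    rw [e1, e2, symm_dot hQ ((-(1/ε)) • (D *ᵥ H t)) (E t),
        symm_dot hP ((-(1/μ)) • (G *ᵥ E t)) (H t),
        Matrix.mulVec_smul, Matrix.mulVec_smul, dotProduct_smul, dotProduct_smul,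
        Matrix.mulVec_mulVec, Matrix.mulVec_mulVec,
        flip_dot (P * G) (H t) (E t), Matrix.transpose_mul, hP.eq,
        Matrix.add_mulVec, dotProduct_add]
    simp only [smul_eq_mul]
    field_simp
    ring
  refine ⟨key, fun hBd t => ?_⟩
  have hval : E t ⬝ᵥ ((Q * D + Gᵀ * P) *ᵥ H t)
      = E t 0 * ((Q * D + Gᵀ * P) *ᵥ H t) 0
        + E t (Fin.last (m+1)) * ((Q * D + Gᵀ * P) *ᵥ H t) (Fin.last (m+1)) := by
    rw [dotProduct]
    rw [← Finset.sum_subset (Finset.subset_univ ({0, Fin.last (m+1)} : Finset (Fin (m+2))))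
      (fun i _ hi => ?_)]
    · rw [Finset.sum_pair (by
        intro h
        have := congrArg Fin.val h
        simp [Fin.last] at this)]
    · have h0 : i.val ≠ 0 := by
        intro h; apply hi; simp [Fin.ext_iff, h]
      have h1 : i.val ≠ m + 1 := by
        intro h; apply hi; simp [Fin.ext_iff, h, Fin.last]
      have : ((Q * D + Gᵀ * P) *ᵥ H t) i = 0 := by
        rw [mulVec]
        simp only [dotProduct]
        exact Finset.sum_eq_zero fun j _ => by rw [hBd i h0 h1 j, zero_mul]
      rw [this, mul_zero]
  rw [← hval]
  exact key t
end
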